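/- arXiv:2306.16557 — 4 statements merged into one kernel-verified Lean document; each statement's English description precedes it below -/
import Mathlib

section
/- Let Z and Z_l be rank-r matrices with Z_l having tangent space S_l (at Z_l on the manifold of rank-r matrices). Then ‖(I − P_{S_l})(Z_l − Z)‖_F ≤ ‖Z_l − Z‖_F² / σ_min(Z), where P_{S_l} is the orthogonal projection onto S_l and σ_min(Z) is the smallest nonzero singular value of Z. -/
open Matrix

attribute [local instance] Matrix.frobeniusSeminormedAddCommGroup

/-- The Frobenius norm of a complex matrix. -/
noncomputable def frobNorm {p q : ℕ} (M : Matrix (Fin p) (Fin q) ℂ) : ℝ :=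
  Real.sqrt (∑ i, ∑ j, ‖M i j‖ ^ 2)

namespace Stmt2Aux

variable {p q r s : ℕ}

/-- Squared Frobenius norm. -/
noncomputable def nsq (M : Matrix (Fin p) (Fin q) ℂ) : ℝ :=
  ∑ i, ∑ j, ‖M i j‖ ^ 2

lemma nsq_nonneg (M : Matrix (Fin p) (Fin q) ℂ) : 0 ≤ nsq M := by
  apply Finset.sum_nonneg; intro i _
  apply Finset.sum_nonneg; intro j _
  positivity

lemma norm_eq_sqrt_nsq (M : Matrix (Fin p) (Fin q) ℂ) : ‖M‖ = Real.sqrt (nsq M) := by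
  rw [Matrix.frobenius_norm_def, Real.sqrt_eq_rpow, nsq]
  norm_num [Real.rpow_two]

lemma frobNorm_eq (M : Matrix (Fin p) (Fin q) ℂ) : frobNorm M = ‖M‖ := by
  rw [norm_eq_sqrt_nsq, frobNorm, nsq]

lemma nsq_eq_trace (M : Matrix (Fin p) (Fin q) ℂ) :
    nsq M = Complex.re (Matrix.trace (Mᴴ * M)) := by
  simp only [Matrix.trace, Matrix.diag, Matrix.mul_apply, Matrix.conjTranspose_apply]
  rw [Complex.re_sum, nsq, Finset.sum_comm]
  congr 1; ext j
  rw [Complex.re_sum]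
  congr 1; ext i
  rw [Complex.star_def, mul_comm, Complex.mul_conj, Complex.ofReal_re,
    Complex.normSq_eq_norm_sq]

lemma nsq_neg (M : Matrix (Fin p) (Fin q) ℂ) : nsq (-M) = nsq M := by
  simp [nsq]

lemma nsq_conjTranspose (M : Matrix (Fin p) (Fin q) ℂ) : nsq Mᴴ = nsq M := by
  rw [nsq, nsq, Finset.sum_comm]
  simp [Matrix.conjTranspose_apply]

lemma nsq_lmul (W : Matrix (Fin p) (Fin s) ℂ) (hW : Wᴴ * W = 1)
    (M : Matrix (Fin s) (Fin q) ℂ) : nsq (W * M) = nsq M := by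
  rw [nsq_eq_trace, nsq_eq_trace]
  congr 2
  rw [Matrix.conjTranspose_mul]
  calc Mᴴ * Wᴴ * (W * M) = Mᴴ * (Wᴴ * W) * M := by
        rw [Matrix.mul_assoc, Matrix.mul_assoc, Matrix.mul_assoc]
    _ = Mᴴ * M := by rw [hW, Matrix.mul_one]

lemma nsq_rmul (W : Matrix (Fin q) (Fin s) ℂ) (hW : Wᴴ * W = 1)
    (M : Matrix (Fin p) (Fin s) ℂ) : nsq (M * Wᴴ) = nsq M := by
  rw [← nsq_conjTranspose (M * Wᴴ), Matrix.conjTranspose_mul,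
    Matrix.conjTranspose_conjTranspose, nsq_lmul W hW, nsq_conjTranspose]

lemma nsq_proj_left (P : Matrix (Fin p) (Fin p) ℂ) (hP : Pᴴ = P) (hPP : P * P = P)
    (M : Matrix (Fin p) (Fin q) ℂ) : nsq (P * M) ≤ nsq M := by
  have key : nsq M - nsq (P * M) = nsq ((1 - P) * M) := by
    rw [nsq_eq_trace, nsq_eq_trace, nsq_eq_trace]
    rw [Matrix.conjTranspose_mul, Matrix.conjTranspose_mul]
    have h1 : Mᴴ * Pᴴ * (P * M) = Mᴴ * (P * M) := by
      rw [hP, Matrix.mul_assoc, ← Matrix.mul_assoc P P M, hPP]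
    have h2 : (1 - P)ᴴ = 1 - P := by
      simp [Matrix.conjTranspose_sub, hP]
    have h3 : Mᴴ * (1 - P)ᴴ * ((1 - P) * M) = Mᴴ * M - Mᴴ * (P * M) := by
      rw [h2]
      have hidem : (1 - P) * ((1 - P) * M) = (1 - P) * M := by
        rw [← Matrix.mul_assoc]
        congr 1
        simp [Matrix.sub_mul, Matrix.mul_sub, hPP]
      rw [Matrix.mul_assoc, hidem, Matrix.sub_mul, Matrix.one_mul, Matrix.mul_sub]
    rw [h1, h3, Matrix.trace_sub, Complex.sub_re]
  have := nsq_nonneg ((1 - P) * M)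
  linarith [key]

lemma nsq_proj_right (P : Matrix (Fin q) (Fin q) ℂ) (hP : Pᴴ = P) (hPP : P * P = P)
    (M : Matrix (Fin p) (Fin q) ℂ) : nsq (M * P) ≤ nsq M := by
  rw [← nsq_conjTranspose (M * P), Matrix.conjTranspose_mul, hP, ← nsq_conjTranspose M]
  exact nsq_proj_left P hP hPP Mᴴ

lemma nsq_mul_diag_ge (c : Fin r → ℝ) (σ : ℝ) (hσ : 0 ≤ σ) (hc : ∀ i, σ ≤ c i)
    (A : Matrix (Fin p) (Fin r) ℂ) :
    σ ^ 2 * nsq A ≤ nsq (A * Matrix.diagonal (fun i => (c i : ℂ))) := by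
  rw [nsq, nsq, Finset.mul_sum]
  apply Finset.sum_le_sum
  intro i _
  rw [Finset.mul_sum]
  apply Finset.sum_le_sum
  intro j _
  rw [Matrix.mul_diagonal]
  rw [norm_mul, mul_pow]
  have h1 : σ ^ 2 ≤ ‖(c j : ℂ)‖ ^ 2 := by
    rw [Complex.norm_real, Real.norm_eq_abs]
    have := hc j
    nlinarith [abs_nonneg (c j), le_abs_self (c j)]
  nlinarith [sq_nonneg ‖A i j‖, norm_nonneg (A i j)]

end Stmt2Aux

open Stmt2Aux

/-- Lemma 3, eq. (sub1.1): for rank-`r` matrices `Zl` (with compact SVD `U Σ Vᴴ`,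
tangent space projection `P(M) = UUᴴM + MVVᴴ − UUᴴMVVᴴ`) and `Z` (with compact SVD
`U₂ Σ₂ V₂ᴴ` and smallest nonzero singular value `σmin`),
`‖(I − P_{S_l})(Zl − Z)‖_F ≤ ‖Zl − Z‖_F² / σmin(Z)`. -/
theorem stmt2 {p q r : ℕ}
    (Z Zl : Matrix (Fin p) (Fin q) ℂ)
    -- compact SVD of `Zl`, a rank-`r` matrix
    (U : Matrix (Fin p) (Fin r) ℂ) (V : Matrix (Fin q) (Fin r) ℂ) (d : Fin r → ℝ)
    (hU : Uᴴ * U = 1) (hV : Vᴴ * V = 1) (hd : ∀ i, 0 < d i)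
    (hZl : Zl = U * Matrix.diagonal (fun i => (d i : ℂ)) * Vᴴ)
    -- compact SVD of `Z`, a rank-`r` matrix
    (U₂ : Matrix (Fin p) (Fin r) ℂ) (V₂ : Matrix (Fin q) (Fin r) ℂ) (d₂ : Fin r → ℝ)
    (hU₂ : U₂ᴴ * U₂ = 1) (hV₂ : V₂ᴴ * V₂ = 1) (hd₂ : ∀ i, 0 < d₂ i)
    (hZ : Z = U₂ * Matrix.diagonal (fun i => (d₂ i : ℂ)) * V₂ᴴ)
    -- `σmin` is the smallest (nonzero) singular value of `Z`
    (σmin : ℝ) (hσ : IsLeast (Set.range d₂) σmin) :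
    frobNorm ((Zl - Z) -
        (U * Uᴴ * (Zl - Z) + (Zl - Z) * (V * Vᴴ) - U * Uᴴ * (Zl - Z) * (V * Vᴴ))) ≤
      frobNorm (Zl - Z) ^ 2 / σmin := by
  -- σmin > 0
  obtain ⟨i₀, hi₀⟩ := hσ.1
  have hσpos : 0 < σmin := hi₀ ▸ hd₂ i₀
  have hσle : ∀ i, σmin ≤ d₂ i := fun i => hσ.2 ⟨i, rfl⟩
  set E : Matrix (Fin p) (Fin q) ℂ := Zl - Z with hE
  set Pu : Matrix (Fin p) (Fin p) ℂ := 1 - U * Uᴴ with hPu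
  set Pv : Matrix (Fin q) (Fin q) ℂ := 1 - V * Vᴴ with hPv
  -- Pu, Pv are Hermitian idempotents
  have hPuH : Puᴴ = Pu := by
    simp [hPu, Matrix.conjTranspose_sub, Matrix.conjTranspose_mul]
  have hPuP : Pu * Pu = Pu := by
    simp only [hPu, Matrix.sub_mul, Matrix.mul_sub, Matrix.one_mul, Matrix.mul_one]
    have : U * Uᴴ * (U * Uᴴ) = U * Uᴴ := by
      rw [Matrix.mul_assoc, ← Matrix.mul_assoc Uᴴ U Uᴴ, hU, Matrix.one_mul]
    rw [this]
    abel
  have hPvH : Pvᴴ = Pv := by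
    simp [hPv, Matrix.conjTranspose_sub, Matrix.conjTranspose_mul]
  have hPvP : Pv * Pv = Pv := by
    simp only [hPv, Matrix.sub_mul, Matrix.mul_sub, Matrix.one_mul, Matrix.mul_one]
    have : V * Vᴴ * (V * Vᴴ) = V * Vᴴ := by
      rw [Matrix.mul_assoc, ← Matrix.mul_assoc Vᴴ V Vᴴ, hV, Matrix.one_mul]
    rw [this]
    abel
  -- Pu annihilates Zl from the left, Pv from the right
  have hUZl : U * Uᴴ * Zl = Zl := by
    rw [hZl]
    simp only [Matrix.mul_assoc]
    rw [← Matrix.mul_assoc Uᴴ U, hU, Matrix.one_mul]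
  have hPuZl : Pu * Zl = 0 := by
    rw [hPu, Matrix.sub_mul, Matrix.one_mul, hUZl, sub_self]
  have hZlV : Zl * (V * Vᴴ) = Zl := by
    rw [hZl]
    simp only [Matrix.mul_assoc]
    rw [← Matrix.mul_assoc Vᴴ V, hV, Matrix.one_mul]
  have hZlPv : Zl * Pv = 0 := by
    rw [hPv, Matrix.mul_sub, Matrix.mul_one, hZlV, sub_self]
  -- The LHS matrix equals  -(Pu * Z * Pv)
  have hLHS : E - (U * Uᴴ * E + E * (V * Vᴴ) - U * Uᴴ * E * (V * Vᴴ)) = -(Pu * Z * Pv) := by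
    have h1 : Pu * E * Pv = -(Pu * Z * Pv) := by
      rw [hE, Matrix.mul_sub Pu Zl Z, hPuZl, zero_sub, Matrix.neg_mul]
    rw [← h1, hPu, hPv]
    simp only [Matrix.sub_mul, Matrix.mul_sub, Matrix.one_mul, Matrix.mul_one]
    abel
  rw [hLHS, frobNorm_eq, frobNorm_eq, norm_neg]
  -- factor Pu * Z * Pv = A * B
  set A : Matrix (Fin p) (Fin r) ℂ := Pu * U₂ with hA
  set B : Matrix (Fin r) (Fin q) ℂ :=
    Matrix.diagonal (fun i => (d₂ i : ℂ)) * (V₂ᴴ * Pv) with hB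
  have hfact : Pu * Z * Pv = A * B := by
    rw [hZ, hA, hB]
    simp only [Matrix.mul_assoc]
  -- bound nsq A : σmin^2 * nsq A ≤ nsq E
  have hAD : A * Matrix.diagonal (fun i => (d₂ i : ℂ)) * V₂ᴴ = Pu * Z := by
    rw [hZ, hA]; simp only [Matrix.mul_assoc]
  have hPuZ : Pu * Z = -(Pu * E) := by
    rw [hE, Matrix.mul_sub, hPuZl, zero_sub, neg_neg]
  have hnsqA : σmin ^ 2 * nsq A ≤ nsq E :=
    calc σmin ^ 2 * nsq A ≤ nsq (A * Matrix.diagonal (fun i => (d₂ i : ℂ))) :=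
          nsq_mul_diag_ge d₂ σmin hσpos.le hσle A
      _ = nsq (A * Matrix.diagonal (fun i => (d₂ i : ℂ)) * V₂ᴴ) := (nsq_rmul V₂ hV₂ _).symm
      _ = nsq (Pu * E) := by rw [hAD, hPuZ, nsq_neg]
      _ ≤ nsq E := nsq_proj_left Pu hPuH hPuP E
  -- bound nsq B ≤ nsq E
  have hUB : U₂ * B = Z * Pv := by
    rw [hB, hZ]
    simp only [Matrix.mul_assoc]
  have hZPv : Z * Pv = -(E * Pv) := by
    rw [hE, Matrix.sub_mul, hZlPv, zero_sub, neg_neg]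
  have hnsqB : nsq B ≤ nsq E :=
    calc nsq B = nsq (U₂ * B) := (nsq_lmul U₂ hU₂ B).symm
      _ = nsq (E * Pv) := by rw [hUB, hZPv, nsq_neg]
      _ ≤ nsq E := nsq_proj_right Pv hPvH hPvP E
  -- put it together
  have hnormA : σmin * ‖A‖ ≤ ‖E‖ := by
    rw [norm_eq_sqrt_nsq, norm_eq_sqrt_nsq]
    have : σmin * Real.sqrt (nsq A) = Real.sqrt (σmin ^ 2 * nsq A) := by
      rw [Real.sqrt_mul (by positivity), Real.sqrt_sq hσpos.le]
    rw [this]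
    exact Real.sqrt_le_sqrt hnsqA
  have hnormB : ‖B‖ ≤ ‖E‖ := by
    rw [norm_eq_sqrt_nsq, norm_eq_sqrt_nsq]
    exact Real.sqrt_le_sqrt hnsqB
  calc ‖Pu * Z * Pv‖ = ‖A * B‖ := by rw [hfact]
    _ ≤ ‖A‖ * ‖B‖ := Matrix.frobenius_norm_mul A B
    _ ≤ (‖E‖ / σmin) * ‖E‖ := by
        apply mul_le_mul _ hnormB (norm_nonneg B) (by positivity)
        rw [div_eq_mul_inv, mul_comm ‖E‖ σmin⁻¹, ← mul_le_mul_iff_right₀ hσpos]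
        rw [← mul_assoc, mul_inv_cancel₀ hσpos.ne', one_mul]
        exact hnormA
    _ = ‖E‖ ^ 2 / σmin := by ring
end

section
/- Let Z and Z_l be rank-r matrices with tangent spaces S and S_l respectively. Then the operator norm of the difference of tangent-space projections satisfies ‖P_{S_l} − P_S‖ ≤ 2‖Z_l − Z‖_F / σ_min(Z). -/
open Matrix

/-- The projection onto the tangent space of a rank-`r` matrix with compact SVD
`U Σ Vᴴ`: `P(M) = UUᴴM + MVVᴴ − UUᴴMVVᴴ`. -/
noncomputable def tangentProj {p q r : ℕ} (U : Matrix (Fin p) (Fin r) ℂ)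
    (V : Matrix (Fin q) (Fin r) ℂ) (M : Matrix (Fin p) (Fin q) ℂ) :
    Matrix (Fin p) (Fin q) ℂ :=
  U * Uᴴ * M + M * (V * Vᴴ) - U * Uᴴ * M * (V * Vᴴ)

namespace Stmt3Aux
set_option linter.unusedSectionVars false
set_option linter.unusedVariables false
attribute [local instance] Matrix.frobeniusSeminormedAddCommGroup Matrix.frobeniusNormedAddCommGroup

variable {m n k : Type*} {k' : ℕ} [Fintype m] [Fintype n] [Fintype k] [DecidableEq m] [DecidableEq n]
  [DecidableEq k]

lemma norm_sq_eq (M : Matrix m n ℂ) : ‖M‖ ^ 2 = ∑ i, ∑ j, ‖M i j‖ ^ 2 := by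
  rw [Matrix.frobenius_norm_def]
  have h : (0:ℝ) ≤ ∑ i, ∑ j, ‖M i j‖ ^ (2:ℝ) := by positivity
  rw [← Real.rpow_natCast (_ ^ (1/2:ℝ)) 2, ← Real.rpow_mul h]
  norm_num

lemma norm_sq_trace (M : Matrix m n ℂ) : ‖M‖ ^ 2 = (Matrix.trace (Mᴴ * M)).re := by
  rw [norm_sq_eq, Matrix.trace, Complex.re_sum, Finset.sum_comm]
  congr 1; ext j
  simp only [Matrix.diag, Matrix.mul_apply, Complex.re_sum, Matrix.conjTranspose_apply]
  congr 1; ext i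
  rw [show star (M i j) = (starRingEnd ℂ) (M i j) from rfl, mul_comm, Complex.mul_conj,
    Complex.ofReal_re, Complex.normSq_eq_norm_sq]

lemma norm_sq_trace' (M : Matrix m n ℂ) : ‖M‖ ^ 2 = (Matrix.trace (M * Mᴴ)).re := by
  rw [norm_sq_trace, Matrix.trace_mul_comm]

lemma le_of_sq_le {a b : ℝ} (ha : 0 ≤ a) (hb : 0 ≤ b) (h : a ^ 2 ≤ b ^ 2) : a ≤ b := by
  nlinarith

lemma eq_of_sq_eq {a b : ℝ} (ha : 0 ≤ a) (hb : 0 ≤ b) (h : a ^ 2 = b ^ 2) : a = b :=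
  le_antisymm (le_of_sq_le ha hb h.le) (le_of_sq_le hb ha h.ge)

lemma compl_idem (P : Matrix m m ℂ) (h : P * P = P) : (1 - P) * (1 - P) = 1 - P := by
  simp only [Matrix.mul_sub, Matrix.sub_mul, Matrix.mul_one, Matrix.one_mul, h]
  abel

lemma compl_herm (P : Matrix m m ℂ) (h : Pᴴ = P) : (1 - P)ᴴ = 1 - P := by
  rw [conjTranspose_sub, conjTranspose_one, h]

/-- Pythagoras for a Hermitian idempotent acting on the left. -/
lemma pyth_left (P : Matrix m m ℂ) (hP : Pᴴ = P) (hP2 : P * P = P) (X : Matrix m n ℂ) :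
    ‖X‖ ^ 2 = ‖P * X‖ ^ 2 + ‖(1 - P) * X‖ ^ 2 := by
  rw [norm_sq_trace, norm_sq_trace, norm_sq_trace]
  have h1 : (P * X)ᴴ * (P * X) = Xᴴ * (P * X) := by
    rw [conjTranspose_mul, hP, Matrix.mul_assoc, ← Matrix.mul_assoc P P X, hP2]
  have h2 : ((1 - P) * X)ᴴ * ((1 - P) * X) = Xᴴ * X - Xᴴ * (P * X) := by
    rw [conjTranspose_mul, compl_herm P hP]
    simp only [Matrix.sub_mul, Matrix.mul_sub, Matrix.one_mul, Matrix.mul_one, Matrix.mul_assoc]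
    rw [← Matrix.mul_assoc P P X, hP2]
    abel
  rw [h1, h2, Matrix.trace_sub, Complex.sub_re]
  ring

lemma norm_proj_left_le (P : Matrix m m ℂ) (hP : Pᴴ = P) (hP2 : P * P = P)
    (X : Matrix m n ℂ) : ‖P * X‖ ≤ ‖X‖ :=
  le_of_sq_le (norm_nonneg _) (norm_nonneg _) (by
    nlinarith [pyth_left P hP hP2 X, sq_nonneg ‖(1 - P) * X‖])

lemma norm_compl_left_le (P : Matrix m m ℂ) (hP : Pᴴ = P) (hP2 : P * P = P)
    (X : Matrix m n ℂ) : ‖(1 - P) * X‖ ≤ ‖X‖ :=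
  le_of_sq_le (norm_nonneg _) (norm_nonneg _) (by
    nlinarith [pyth_left P hP hP2 X, sq_nonneg ‖P * X‖])

/-- Pythagoras for a Hermitian idempotent acting on the right. -/
lemma pyth_right (Q : Matrix n n ℂ) (hQ : Qᴴ = Q) (hQ2 : Q * Q = Q) (X : Matrix m n ℂ) :
    ‖X‖ ^ 2 = ‖X * Q‖ ^ 2 + ‖X * (1 - Q)‖ ^ 2 := by
  have h1 : ‖X * Q‖ = ‖Q * Xᴴ‖ := by
    rw [← Matrix.frobenius_norm_conjTranspose (X * Q), conjTranspose_mul, hQ]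
  have h2 : ‖X * (1 - Q)‖ = ‖(1 - Q) * Xᴴ‖ := by
    rw [← Matrix.frobenius_norm_conjTranspose (X * (1 - Q)), conjTranspose_mul, compl_herm Q hQ]
  rw [h1, h2, ← Matrix.frobenius_norm_conjTranspose X]
  exact pyth_left Q hQ hQ2 Xᴴ

lemma norm_proj_right_le (Q : Matrix n n ℂ) (hQ : Qᴴ = Q) (hQ2 : Q * Q = Q)
    (X : Matrix m n ℂ) : ‖X * Q‖ ≤ ‖X‖ :=
  le_of_sq_le (norm_nonneg _) (norm_nonneg _) (by
    nlinarith [pyth_right Q hQ hQ2 X, sq_nonneg ‖X * (1 - Q)‖])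

lemma norm_compl_right_le (Q : Matrix n n ℂ) (hQ : Qᴴ = Q) (hQ2 : Q * Q = Q)
    (X : Matrix m n ℂ) : ‖X * (1 - Q)‖ ≤ ‖X‖ :=
  le_of_sq_le (norm_nonneg _) (norm_nonneg _) (by
    nlinarith [pyth_right Q hQ hQ2 X, sq_nonneg ‖X * Q‖])

/-- Right multiplication by `Wᴴ` with `Wᴴ * W = 1` is a Frobenius isometry. -/
lemma norm_mul_conjTranspose_eq (W : Matrix n k ℂ) (hW : Wᴴ * W = 1) (X : Matrix m k ℂ) :
    ‖X * Wᴴ‖ = ‖X‖ := by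
  refine eq_of_sq_eq (norm_nonneg _) (norm_nonneg _) ?_
  rw [norm_sq_trace', norm_sq_trace', conjTranspose_mul, conjTranspose_conjTranspose]
  simp only [Matrix.mul_assoc]
  rw [← Matrix.mul_assoc Wᴴ W, hW, Matrix.one_mul]

/-- Right multiplication by `W` with `Wᴴ * W = 1` is a Frobenius contraction. -/
lemma norm_mul_isometry_le (W : Matrix n k ℂ) (hW : Wᴴ * W = 1) (X : Matrix m n ℂ) :
    ‖X * W‖ ≤ ‖X‖ := by
  have hQ : (W * Wᴴ)ᴴ = W * Wᴴ := by rw [conjTranspose_mul, conjTranspose_conjTranspose]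
  have hQ2 : (W * Wᴴ) * (W * Wᴴ) = W * Wᴴ := by
    rw [Matrix.mul_assoc, ← Matrix.mul_assoc Wᴴ W, hW, Matrix.one_mul]
  have h : ‖X * W‖ = ‖X * (W * Wᴴ)‖ := by
    refine eq_of_sq_eq (norm_nonneg _) (norm_nonneg _) ?_
    rw [norm_sq_trace', norm_sq_trace', conjTranspose_mul, conjTranspose_mul, hQ]
    simp only [Matrix.mul_assoc]
    rw [← Matrix.mul_assoc Wᴴ W, hW, Matrix.one_mul]
  rw [h]
  exact norm_proj_right_le _ hQ hQ2 X


/-- The two "sine" blocks of two equal-trace Hermitian projections have equal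
Frobenius norms. -/
lemma cross_eq (P P₂ : Matrix m m ℂ) (hP : Pᴴ = P) (hPi : P * P = P)
    (hP₂ : P₂ᴴ = P₂) (hP₂i : P₂ * P₂ = P₂) (ht : P.trace = P₂.trace) :
    ‖P * (1 - P₂)‖ = ‖(1 - P) * P₂‖ := by
  refine eq_of_sq_eq (norm_nonneg _) (norm_nonneg _) ?_
  rw [norm_sq_trace', norm_sq_trace']
  have e1 : (P * (1 - P₂)) * (P * (1 - P₂))ᴴ = P * ((1 - P₂) * P) := by
    rw [conjTranspose_mul, hP, compl_herm P₂ hP₂]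
    calc P * (1 - P₂) * ((1 - P₂) * P) = P * ((1 - P₂) * (1 - P₂) * P) := by
          simp only [Matrix.mul_assoc]
      _ = P * ((1 - P₂) * P) := by rw [compl_idem P₂ hP₂i]
  have e2 : ((1 - P) * P₂) * ((1 - P) * P₂)ᴴ = (1 - P) * (P₂ * (1 - P)) := by
    rw [conjTranspose_mul, hP₂, compl_herm P hP]
    calc (1 - P) * P₂ * (P₂ * (1 - P)) = (1 - P) * (P₂ * P₂ * (1 - P)) := by
          simp only [Matrix.mul_assoc]
      _ = (1 - P) * (P₂ * (1 - P)) := by rw [hP₂i]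
  rw [e1, e2]
  have t1 : (P * ((1 - P₂) * P)).trace = (P * (1 - P₂)).trace := by
    rw [Matrix.trace_mul_comm P ((1 - P₂) * P), Matrix.mul_assoc, hPi,
      Matrix.trace_mul_comm]
  have t2 : ((1 - P) * (P₂ * (1 - P))).trace = ((1 - P) * P₂).trace := by
    rw [Matrix.trace_mul_comm (1 - P) (P₂ * (1 - P)), Matrix.mul_assoc,
      compl_idem P hPi, Matrix.trace_mul_comm]
  rw [t1, t2]
  have : (P * (1 - P₂)).trace = ((1 - P) * P₂).trace := by
    simp only [Matrix.mul_sub, Matrix.sub_mul, Matrix.mul_one, Matrix.one_mul,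
      Matrix.trace_sub]
    rw [ht, Matrix.trace_mul_comm]
  rw [this]

/-- Right multiplication by the inverse diagonal matrix. -/
lemma norm_mul_diag_inv_le (W : Matrix m (Fin k') ℂ) (e : Fin k' → ℝ) (σ : ℝ)
    (hσ : 0 < σ) (he : ∀ i, σ ≤ e i) :
    σ * ‖W * Matrix.diagonal (fun i => ((e i : ℂ))⁻¹)‖ ≤ ‖W‖ := by
  refine le_of_sq_le (by positivity) (norm_nonneg _) ?_
  rw [mul_pow, norm_sq_eq, norm_sq_eq, Finset.mul_sum]
  refine Finset.sum_le_sum fun i _ => ?_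
  rw [Finset.mul_sum]
  refine Finset.sum_le_sum fun j _ => ?_
  rw [Matrix.mul_diagonal, norm_mul, mul_pow]
  have he0 : 0 < e j := lt_of_lt_of_le hσ (he j)
  have hn : ‖((e j : ℂ))⁻¹‖ = (e j)⁻¹ := by
    rw [norm_inv, Complex.norm_real, Real.norm_eq_abs, abs_of_pos he0]
  rw [hn]
  have h1 : σ * (e j)⁻¹ ≤ 1 := by
    rw [← div_eq_mul_inv]
    exact (div_le_one he0).mpr (he j)
  have h2 : 0 ≤ σ * (e j)⁻¹ := by positivity
  nlinarith [sq_nonneg ‖W i j‖, sq_nonneg ‖W i j‖, mul_le_one₀ h1 h2 h1]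

lemma UUH_herm {p' r' : ℕ} (U : Matrix (Fin p') (Fin r') ℂ) : (U * Uᴴ)ᴴ = U * Uᴴ := by
  rw [conjTranspose_mul, conjTranspose_conjTranspose]

lemma UUH_idem {p' r' : ℕ} (U : Matrix (Fin p') (Fin r') ℂ) (hU : Uᴴ * U = 1) :
    (U * Uᴴ) * (U * Uᴴ) = U * Uᴴ := by
  rw [Matrix.mul_assoc, ← Matrix.mul_assoc Uᴴ U, hU, Matrix.one_mul]

/-- The key estimate: `σ ‖(1 - P_l) P‖ ≤ ‖Z_l − Z‖`. -/
lemma key {p' q' r' : ℕ} (U : Matrix (Fin p') (Fin r') ℂ) (V : Matrix (Fin q') (Fin r') ℂ)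
    (d : Fin r' → ℝ) (hU : Uᴴ * U = 1)
    (U₂ : Matrix (Fin p') (Fin r') ℂ) (V₂ : Matrix (Fin q') (Fin r') ℂ) (d₂ : Fin r' → ℝ)
    (hU₂ : U₂ᴴ * U₂ = 1) (hV₂ : V₂ᴴ * V₂ = 1) (hd₂ : ∀ i, 0 < d₂ i)
    (σ : ℝ) (hσ0 : 0 < σ) (hσle : ∀ i, σ ≤ d₂ i) :
    σ * ‖(1 - U * Uᴴ) * (U₂ * U₂ᴴ)‖ ≤
      ‖U * Matrix.diagonal (fun i => (d i : ℂ)) * Vᴴ -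
        U₂ * Matrix.diagonal (fun i => (d₂ i : ℂ)) * V₂ᴴ‖ := by
  set D : Matrix (Fin r') (Fin r') ℂ := Matrix.diagonal (fun i => (d i : ℂ)) with hD
  set D₂ : Matrix (Fin r') (Fin r') ℂ := Matrix.diagonal (fun i => (d₂ i : ℂ)) with hD₂
  set E : Matrix (Fin r') (Fin r') ℂ := Matrix.diagonal (fun i => ((d₂ i : ℂ))⁻¹) with hE
  set Zl := U * D * Vᴴ with hZl
  set Z := U₂ * D₂ * V₂ᴴ with hZ
  set C : Matrix (Fin p') (Fin p') ℂ := 1 - U * Uᴴ with hC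
  have hDE : D₂ * E = 1 := by
    rw [hD₂, hE, Matrix.diagonal_mul_diagonal]
    rw [show (fun i => (d₂ i : ℂ) * ((d₂ i : ℂ))⁻¹) = fun _ => (1:ℂ) from funext fun i => by
      exact mul_inv_cancel₀ (by exact_mod_cast (hd₂ i).ne')]
    exact Matrix.diagonal_one
  have hZV : Z * V₂ * E = U₂ := by
    rw [hZ]
    calc U₂ * D₂ * V₂ᴴ * V₂ * E = U₂ * (D₂ * ((V₂ᴴ * V₂) * E)) := by
          simp only [Matrix.mul_assoc]
      _ = U₂ := by rw [hV₂, Matrix.one_mul, hDE, Matrix.mul_one]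
  have hCZl : C * Zl = 0 := by
    rw [hC, hZl, Matrix.sub_mul, Matrix.one_mul]
    rw [show U * Uᴴ * (U * D * Vᴴ) = U * D * Vᴴ from by
      calc U * Uᴴ * (U * D * Vᴴ) = U * ((Uᴴ * U) * (D * Vᴴ)) := by simp only [Matrix.mul_assoc]
        _ = U * D * Vᴴ := by rw [hU, Matrix.one_mul, Matrix.mul_assoc]]
    exact sub_self _
  have hkey : C * (U₂ * U₂ᴴ) = ((C * (Z - Zl)) * V₂ * E) * U₂ᴴ := by
    rw [Matrix.mul_sub, hCZl, sub_zero]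
    calc C * (U₂ * U₂ᴴ) = (C * (Z * V₂ * E)) * U₂ᴴ := by
          rw [hZV]; simp only [Matrix.mul_assoc]
      _ = ((C * Z) * V₂ * E) * U₂ᴴ := by simp only [Matrix.mul_assoc]
  have hherm : (U * Uᴴ)ᴴ = U * Uᴴ := UUH_herm U
  have hidem : (U * Uᴴ) * (U * Uᴴ) = U * Uᴴ := UUH_idem U hU
  calc σ * ‖C * (U₂ * U₂ᴴ)‖ = σ * ‖((C * (Z - Zl)) * V₂ * E) * U₂ᴴ‖ := by rw [hkey]
    _ = σ * ‖(C * (Z - Zl)) * V₂ * E‖ := by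
        rw [norm_mul_conjTranspose_eq U₂ hU₂]
    _ ≤ ‖(C * (Z - Zl)) * V₂‖ := by
        rw [hE]; exact norm_mul_diag_inv_le _ d₂ σ hσ0 hσle
    _ ≤ ‖C * (Z - Zl)‖ := norm_mul_isometry_le V₂ hV₂ _
    _ ≤ ‖Z - Zl‖ := norm_compl_left_le (U * Uᴴ) hherm hidem _
    _ = ‖Zl - Z‖ := norm_sub_rev _ _

/-- Difference of two Hermitian projections acting on the left. -/
lemma projdiff (P P₂ : Matrix m m ℂ) (hP : Pᴴ = P) (hPi : P * P = P)
    (hP₂ : P₂ᴴ = P₂) (hP₂i : P₂ * P₂ = P₂) (c : ℝ)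
    (h1 : ‖P * (1 - P₂)‖ ≤ c) (h2 : ‖(1 - P) * P₂‖ ≤ c) (X : Matrix m n ℂ) :
    ‖(P - P₂) * X‖ ≤ c * ‖X‖ := by
  have hc : 0 ≤ c := le_trans (norm_nonneg _) h2
  have a1 : P * (P - P₂) = (P * (1 - P₂)) * (1 - P₂) := by
    simp only [mul_sub, sub_mul, mul_one, one_mul, hPi]
    rw [mul_assoc P P₂ P₂, hP₂i]
    abel
  have a2 : (1 - P) * (P - P₂) = -(((1 - P) * P₂) * P₂) := by
    simp only [mul_sub, sub_mul, mul_one, one_mul, hPi]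
    rw [mul_assoc P P₂ P₂, hP₂i]
    abel
  have e1 : P * ((P - P₂) * X) = (P * (1 - P₂)) * ((1 - P₂) * X) := by
    rw [← Matrix.mul_assoc, a1, Matrix.mul_assoc]
  have e2 : (1 - P) * ((P - P₂) * X) = -(((1 - P) * P₂) * (P₂ * X)) := by
    rw [← Matrix.mul_assoc, a2, Matrix.neg_mul, Matrix.mul_assoc]
  have pyth1 := pyth_left P hP hPi ((P - P₂) * X)
  have pyth2 := pyth_left P₂ hP₂ hP₂i X
  rw [e1, e2, norm_neg] at pyth1
  have b1 : ‖(P * (1 - P₂)) * ((1 - P₂) * X)‖ ≤ c * ‖(1 - P₂) * X‖ :=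
    le_trans (Matrix.frobenius_norm_mul _ _) (mul_le_mul_of_nonneg_right h1 (norm_nonneg _))
  have b2 : ‖((1 - P) * P₂) * (P₂ * X)‖ ≤ c * ‖P₂ * X‖ :=
    le_trans (Matrix.frobenius_norm_mul _ _) (mul_le_mul_of_nonneg_right h2 (norm_nonneg _))
  refine le_of_sq_le (norm_nonneg _) (by positivity) ?_
  have s1 := pow_le_pow_left₀ (norm_nonneg ((P * (1 - P₂)) * ((1 - P₂) * X))) b1 2
  have s2 := pow_le_pow_left₀ (norm_nonneg (((1 - P) * P₂) * (P₂ * X))) b2 2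
  calc ‖(P - P₂) * X‖ ^ 2
      ≤ (c * ‖(1 - P₂) * X‖) ^ 2 + (c * ‖P₂ * X‖) ^ 2 := by rw [pyth1]; exact add_le_add s1 s2
    _ = c ^ 2 * (‖P₂ * X‖ ^ 2 + ‖(1 - P₂) * X‖ ^ 2) := by ring
    _ = (c * ‖X‖) ^ 2 := by rw [← pyth2]; ring

/-- Difference of two Hermitian projections acting on the right. -/
lemma projdiff_right (Q Q₂ : Matrix n n ℂ) (hQ : Qᴴ = Q) (hQi : Q * Q = Q)
    (hQ₂ : Q₂ᴴ = Q₂) (hQ₂i : Q₂ * Q₂ = Q₂) (c : ℝ)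
    (h1 : ‖Q * (1 - Q₂)‖ ≤ c) (h2 : ‖(1 - Q) * Q₂‖ ≤ c) (X : Matrix m n ℂ) :
    ‖X * (Q - Q₂)‖ ≤ c * ‖X‖ := by
  have : ‖X * (Q - Q₂)‖ = ‖(Q - Q₂) * Xᴴ‖ := by
    rw [← Matrix.frobenius_norm_conjTranspose (X * (Q - Q₂)), conjTranspose_mul,
      conjTranspose_sub, hQ, hQ₂]
  rw [this, ← Matrix.frobenius_norm_conjTranspose X]
  exact projdiff Q Q₂ hQ hQi hQ₂ hQ₂i c h1 h2 Xᴴ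

lemma frobNorm_eq {p' q' : ℕ} (M : Matrix (Fin p') (Fin q') ℂ) : frobNorm M = ‖M‖ := by
  rw [frobNorm, ← Real.sqrt_sq (norm_nonneg M), norm_sq_eq]

end Stmt3Aux

section Main

open Stmt3Aux

attribute [local instance] Matrix.frobeniusSeminormedAddCommGroup
  Matrix.frobeniusNormedAddCommGroup

/-- Lemma 3, eq. (sub1.3): for rank-`r` matrices `Zl` and `Z` with tangent spaces
`S_l` and `S`, the operator norm (with respect to the Frobenius norm) of the
difference of the tangent space projections satisfies
`‖P_{S_l} − P_S‖ ≤ 2‖Zl − Z‖_F / σmin(Z)`. -/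
theorem stmt3 {p q r : ℕ}
    (Z Zl : Matrix (Fin p) (Fin q) ℂ)
    -- compact SVD of `Zl`, a rank-`r` matrix
    (U : Matrix (Fin p) (Fin r) ℂ) (V : Matrix (Fin q) (Fin r) ℂ) (d : Fin r → ℝ)
    (hU : Uᴴ * U = 1) (hV : Vᴴ * V = 1) (hd : ∀ i, 0 < d i)
    (hZl : Zl = U * Matrix.diagonal (fun i => (d i : ℂ)) * Vᴴ)
    -- compact SVD of `Z`, a rank-`r` matrix
    (U₂ : Matrix (Fin p) (Fin r) ℂ) (V₂ : Matrix (Fin q) (Fin r) ℂ) (d₂ : Fin r → ℝ)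
    (hU₂ : U₂ᴴ * U₂ = 1) (hV₂ : V₂ᴴ * V₂ = 1) (hd₂ : ∀ i, 0 < d₂ i)
    (hZ : Z = U₂ * Matrix.diagonal (fun i => (d₂ i : ℂ)) * V₂ᴴ)
    -- `σmin` is the smallest (nonzero) singular value of `Z`
    (σmin : ℝ) (hσ : IsLeast (Set.range d₂) σmin) :
    ∀ M : Matrix (Fin p) (Fin q) ℂ,
      frobNorm (tangentProj U V M - tangentProj U₂ V₂ M) ≤
        2 * frobNorm (Zl - Z) / σmin * frobNorm M := by
  intro M
  obtain ⟨⟨i0, hi0⟩, hlb⟩ := hσ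
  have hσ0 : 0 < σmin := hi0 ▸ hd₂ i0
  have hσle : ∀ i, σmin ≤ d₂ i := fun i => hlb ⟨i, rfl⟩
  -- the key sine estimates
  have hεP := key U V d hU U₂ V₂ d₂ hU₂ hV₂ hd₂ σmin hσ0 hσle
  rw [← hZl, ← hZ] at hεP
  have hεQ := key V U d hV V₂ U₂ d₂ hV₂ hU₂ hd₂ σmin hσ0 hσle
  have hDH : (Matrix.diagonal fun i => (d i : ℂ))ᴴ = Matrix.diagonal fun i => (d i : ℂ) := by
    simp [Matrix.diagonal_conjTranspose, Pi.star_def, Complex.conj_ofReal]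
  have hDH₂ : (Matrix.diagonal fun i => (d₂ i : ℂ))ᴴ = Matrix.diagonal fun i => (d₂ i : ℂ) := by
    simp [Matrix.diagonal_conjTranspose, Pi.star_def, Complex.conj_ofReal]
  have hT : V * Matrix.diagonal (fun i => (d i : ℂ)) * Uᴴ = Zlᴴ := by
    rw [hZl, conjTranspose_mul, conjTranspose_mul, conjTranspose_conjTranspose, hDH,
      Matrix.mul_assoc]
  have hT₂ : V₂ * Matrix.diagonal (fun i => (d₂ i : ℂ)) * U₂ᴴ = Zᴴ := by
    rw [hZ, conjTranspose_mul, conjTranspose_mul, conjTranspose_conjTranspose, hDH₂,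
      Matrix.mul_assoc]
  rw [hT, hT₂] at hεQ
  have hεQ' : σmin * ‖(1 - V * Vᴴ) * (V₂ * V₂ᴴ)‖ ≤ ‖Zl - Z‖ := by
    calc σmin * ‖(1 - V * Vᴴ) * (V₂ * V₂ᴴ)‖ ≤ ‖Zlᴴ - Zᴴ‖ := hεQ
      _ = ‖(Zl - Z)ᴴ‖ := by rw [conjTranspose_sub]
      _ = ‖Zl - Z‖ := Matrix.frobenius_norm_conjTranspose _
  -- the four block bounds
  set c : ℝ := ‖Zl - Z‖ / σmin with hc
  have hc0 : 0 ≤ c := div_nonneg (norm_nonneg _) hσ0.le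
  have hb2 : ‖(1 - U * Uᴴ) * (U₂ * U₂ᴴ)‖ ≤ c :=
    (le_div_iff₀ hσ0).mpr (by rw [mul_comm] at hεP; exact hεP)
  have htr : (U * Uᴴ).trace = (U₂ * U₂ᴴ).trace := by
    rw [Matrix.trace_mul_comm, hU, Matrix.trace_mul_comm U₂, hU₂]
  have hb1 : ‖(U * Uᴴ) * (1 - U₂ * U₂ᴴ)‖ ≤ c := by
    rw [cross_eq (U * Uᴴ) (U₂ * U₂ᴴ) (UUH_herm U) (UUH_idem U hU) (UUH_herm U₂)
      (UUH_idem U₂ hU₂) htr]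
    exact hb2
  have hb4 : ‖(1 - V * Vᴴ) * (V₂ * V₂ᴴ)‖ ≤ c :=
    (le_div_iff₀ hσ0).mpr (by rw [mul_comm] at hεQ'; exact hεQ')
  have htrV : (V * Vᴴ).trace = (V₂ * V₂ᴴ).trace := by
    rw [Matrix.trace_mul_comm, hV, Matrix.trace_mul_comm V₂, hV₂]
  have hb3 : ‖(V * Vᴴ) * (1 - V₂ * V₂ᴴ)‖ ≤ c := by
    rw [cross_eq (V * Vᴴ) (V₂ * V₂ᴴ) (UUH_herm V) (UUH_idem V hV) (UUH_herm V₂)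
      (UUH_idem V₂ hV₂) htrV]
    exact hb4
  -- the algebraic identity for the difference of tangent projections
  have hid : tangentProj U V M - tangentProj U₂ V₂ M =
      (U * Uᴴ - U₂ * U₂ᴴ) * (M * (1 - V * Vᴴ)) +
        ((1 - U₂ * U₂ᴴ) * M) * (V * Vᴴ - V₂ * V₂ᴴ) := by
    simp only [tangentProj, Matrix.mul_sub, Matrix.sub_mul, Matrix.mul_one, Matrix.one_mul,
      Matrix.mul_assoc]
    abel
  simp only [frobNorm_eq]
  rw [hid]
  calc ‖(U * Uᴴ - U₂ * U₂ᴴ) * (M * (1 - V * Vᴴ)) +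
        ((1 - U₂ * U₂ᴴ) * M) * (V * Vᴴ - V₂ * V₂ᴴ)‖
      ≤ ‖(U * Uᴴ - U₂ * U₂ᴴ) * (M * (1 - V * Vᴴ))‖ +
        ‖((1 - U₂ * U₂ᴴ) * M) * (V * Vᴴ - V₂ * V₂ᴴ)‖ := norm_add_le _ _
    _ ≤ c * ‖M * (1 - V * Vᴴ)‖ + c * ‖(1 - U₂ * U₂ᴴ) * M‖ := by
        refine add_le_add ?_ ?_
        · exact projdiff (U * Uᴴ) (U₂ * U₂ᴴ) (UUH_herm U) (UUH_idem U hU) (UUH_herm U₂)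
            (UUH_idem U₂ hU₂) c hb1 hb2 _
        · exact projdiff_right (V * Vᴴ) (V₂ * V₂ᴴ) (UUH_herm V) (UUH_idem V hV) (UUH_herm V₂)
            (UUH_idem V₂ hV₂) c hb3 hb4 _
    _ ≤ c * ‖M‖ + c * ‖M‖ := by
        refine add_le_add ?_ ?_
        · exact mul_le_mul_of_nonneg_left
            (norm_compl_right_le (V * Vᴴ) (UUH_herm V) (UUH_idem V hV) M) hc0
        · exact mul_le_mul_of_nonneg_left
            (norm_compl_left_le (U₂ * U₂ᴴ) (UUH_herm U₂) (UUH_idem U₂ hU₂) M) hc0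
    _ = 2 * ‖Zl - Z‖ / σmin * ‖M‖ := by rw [hc]; ring

end Main
end

section
/- Let L be a linear operator on C^{N×N} with all eigenvalues real and spectral radius ρ(L) < 1, and let β ∈ (0, ρ(L)²). Define the block operator L̃ on pairs (M₁, M₂) by L̃(M₁, M₂) = (L(M₁) + β(M₁ − M₂), M₁). Then every nonzero eigenvalue λ of L̃ satisfies |λ| < ρ(L); in particular ρ(L̃) < ρ(L). -/
/-- Heavy-ball spectral radius improvement: let `L` be a linear operator on
`ℂ^{N×N}` with all eigenvalues real and of modulus at most `ρ < 1` (its spectral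
radius), and let `β ∈ (0, ρ²)`.  The block operator
`L̃(M₁, M₂) = (L M₁ + β (M₁ − M₂), M₁)` then has every nonzero eigenvalue `λ`
satisfying `|λ| < ρ`; in particular `ρ(L̃) < ρ(L)`. -/
theorem stmt7 {N : ℕ} (L : Module.End ℂ (Matrix (Fin N) (Fin N) ℂ))
    (hreal : ∀ μ : ℂ, Module.End.HasEigenvalue L μ → μ.im = 0)
    (ρ : ℝ) (hρ : ∀ μ : ℂ, Module.End.HasEigenvalue L μ → ‖μ‖ ≤ ρ)
    (hρeig : ∃ μ : ℂ, Module.End.HasEigenvalue L μ ∧ ‖μ‖ = ρ)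
    (hρ1 : ρ < 1)
    (β : ℝ) (hβ0 : 0 < β) (hβρ : β < ρ ^ 2) :
    ∀ lam : ℂ, lam ≠ 0 →
      ∀ M₁ M₂ : Matrix (Fin N) (Fin N) ℂ, (M₁, M₂) ≠ 0 →
        -- the eigen-equation `L̃(M₁, M₂) = λ (M₁, M₂)`
        L M₁ + (β : ℂ) • (M₁ - M₂) = lam • M₁ → M₁ = lam • M₂ →
        ‖lam‖ < ρ := by
  intro lam hlam M₁ M₂ hM h1 h2
  -- ρ > 0
  have hρ0 : 0 < ρ := by
    obtain ⟨μ, _, hμ⟩ := hρeig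
    have : (0:ℝ) ≤ ρ := hμ ▸ norm_nonneg μ
    nlinarith
  -- M₂ ≠ 0
  have hM₂ : M₂ ≠ 0 := by
    intro h
    apply hM
    simp [h, h2 ▸ (by simp [h] : lam • M₂ = 0)]
  -- the eigenvalue η of L
  set η : ℂ := lam - β + β * lam⁻¹ with hηdef
  have key : lam • L M₂ = (lam * η) • M₂ := by
    rw [h2, map_smul] at h1
    have h1' : lam • L M₂ = lam • (lam • M₂) - (β:ℂ) • (lam • M₂ - M₂) := by
      rw [← h1]; abel
    rw [h1']
    rw [smul_smul, smul_sub, smul_smul, ← sub_smul, ← sub_smul]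
    congr 1
    rw [hηdef]; linear_combination (-(β:ℂ)) * mul_inv_cancel₀ hlam
  have hLM₂ : L M₂ = η • M₂ := by
    have := smul_right_injective (Matrix (Fin N) (Fin N) ℂ) hlam
      (by rw [key, smul_smul] : lam • L M₂ = lam • (η • M₂))
    exact this
  have heig : Module.End.HasEigenvalue L η :=
    Module.End.hasEigenvalue_of_hasEigenvector
      ⟨Module.End.mem_eigenspace_iff.mpr hLM₂, hM₂⟩
  have him : η.im = 0 := hreal η heig
  have habs : ‖η‖ ≤ ρ := hρ η heig
  set e : ℝ := η.re with hedef
  have hηe : η = (e : ℂ) := by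
    apply Complex.ext <;> simp [him, hedef]
  have heρ : |e| ≤ ρ := by
    rwa [hηe, Complex.norm_real, Real.norm_eq_abs] at habs
  -- the quadratic equation for lam
  have hquad : lam ^ 2 - ((e : ℂ) + β) * lam + β = 0 := by
    have : lam * η = lam ^ 2 - (β:ℂ) * lam + β := by
      rw [hηdef]; field_simp
    rw [hηe] at this
    linear_combination -this
  set a : ℝ := lam.re with hadef
  set b : ℝ := lam.im with hbdef
  have hcomp : a ^ 2 - b ^ 2 - (e + β) * a + β = 0 ∧
      2 * a * b - (e + β) * b = 0 := by
    have g1 := congrArg Complex.re hquad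
    have g2 := congrArg Complex.im hquad
    simp [pow_two, Complex.mul_re, Complex.mul_im] at g1 g2
    constructor <;> nlinarith [g1, g2]
  obtain ⟨hre, him2⟩ := hcomp
  have habs2 : ‖lam‖ ^ 2 = a ^ 2 + b ^ 2 := by
    rw [Complex.sq_norm, Complex.normSq_apply]; ring
  by_cases hb : b = 0
  · -- real eigenvalue case
    have ha0 : a ≠ 0 := by
      intro h
      apply hlam
      apply Complex.ext <;> simp [← hadef, ← hbdef, h, hb]
    have hre' : a ^ 2 - (e + β) * a + β = 0 := by rw [hb] at hre; linarith [hre]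
    have hlab : ‖lam‖ = |a| := by
      have : lam = (a : ℂ) := by apply Complex.ext <;> simp [← hadef, ← hbdef, hb]
      rw [this, Complex.norm_real, Real.norm_eq_abs]
    rw [hlab]
    rw [abs_lt]
    obtain ⟨he1, he2⟩ := abs_le.mp heρ
    constructor
    · -- -ρ < a : suppose a ≤ -ρ, contradiction
      by_contra h
      push_neg at h
      -- a ≤ -ρ < 0, so a < 0; a * f(-ρ) with f(-ρ) = ρ² + (e+β)ρ + β ≥ βρ + β > 0
      nlinarith [mul_pos hβ0 hρ0, sq_nonneg (a + ρ), mul_nonneg hβ0.le hρ0.le]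
    · by_contra h
      push_neg at h
      nlinarith [mul_pos hβ0 (sub_pos.mpr hρ1), sq_nonneg (a - ρ), mul_nonneg hβ0.le hρ0.le]
  · -- complex eigenvalue case: |lam|² = β
    have hsum : e + β = 2 * a := by
      rcases mul_eq_zero.mp (by linear_combination him2 : (2 * a - (e + β)) * b = 0) with h | h
      · linarith
      · exact absurd h hb
    have hβab : β = a ^ 2 + b ^ 2 := by linear_combination hre + a * hsum
    have : ‖lam‖ ^ 2 < ρ ^ 2 := by rw [habs2, ← hβab]; exact hβρ
    nlinarith [norm_nonneg lam, hρ0]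
end

section
/- Let λ be a nonzero eigenvalue of the block operator L̃(M₁, M₂) = (L(M₁) + β(M₁ − M₂), M₁), where L is a linear operator on a matrix space and β ∈ C. Then there exists a nonzero matrix M₂ which is an eigenmatrix of L with eigenvalue η = λ − β + β/λ; equivalently, λ² − (η + β)λ + β = 0. -/
/-- If `λ ≠ 0` is an eigenvalue of the block operator
`L̃(M₁, M₂) = (L M₁ + β (M₁ − M₂), M₁)` with eigen-pair `(M₁, M₂) ≠ 0`, then `M₂`
is a nonzero eigenmatrix of `L` with eigenvalue `η = λ − β + β/λ`; equivalently
`λ² − (η + β)λ + β = 0`. -/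
theorem stmt8 {p q : ℕ} (L : Module.End ℂ (Matrix (Fin p) (Fin q) ℂ)) (β : ℂ)
    (lam : ℂ) (hlam : lam ≠ 0)
    (M₁ M₂ : Matrix (Fin p) (Fin q) ℂ) (hM : (M₁, M₂) ≠ 0)
    (heig1 : L M₁ + β • (M₁ - M₂) = lam • M₁)
    (heig2 : M₁ = lam • M₂) :
    M₂ ≠ 0 ∧ L M₂ = (lam - β + β / lam) • M₂ ∧
      lam ^ 2 - ((lam - β + β / lam) + β) * lam + β = 0 := by
  have hM₂ : M₂ ≠ 0 := by
    intro h
    apply hM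
    subst h
    simp_all
  refine ⟨hM₂, ?_, by field_simp; ring⟩
  subst heig2
  rw [map_smul] at heig1
  have key : lam • L M₂ = (lam ^ 2 - β * lam + β) • M₂ := by
    have h2 : lam • L M₂ = lam • lam • M₂ - β • (lam • M₂ - M₂) := by
      rw [← heig1]; abel
    rw [h2]; module
  have := congrArg (fun X => lam⁻¹ • X) key
  simp only [smul_smul, inv_mul_cancel₀ hlam, one_smul] at this
  rw [this]
  congr 1
  field_simp
end
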